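/- arXiv:0907.4927 — 10 statements merged into one kernel-verified Lean document; each statement's English description precedes it below -/
import Mathlib

section
/- Let K be a field of characteristic zero, B a Poisson algebra over K, M a positive integer, Λ an arbitrary type of spectral parameters, F : Fin M → Fin M → MvPolynomial (Fin M) K, and Δ : ℕ → Λ → Fin M → B a family of 'loop coproduct' assignments of elements of B to the M generators. Suppose there exists f : ℕ → ℕ → Λ → Λ → Fin M → Fin M → B such that for all i < k, all λ, μ ∈ Λ and all α, β ∈ Fin M: {Δ i λ α, Δ k μ β} = Σ_γ (f i k λ μ β γ) * (aeval (Δ i λ)) (F α γ). Then for every formal Casimir C for F, every i < k, every λ, μ ∈ Λ and every β ∈ Fin M: {(aeval (Δ i λ)) C, Δ k μ β} = 0. -/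
open scoped BigOperators

/-- A Poisson algebra structure over `K` on a commutative `K`-algebra `B`:
a `K`-bilinear bracket that is antisymmetric, satisfies the Jacobi identity and
the Leibniz rule. -/
structure PoissonStructure (K B : Type*) [CommRing K] [CommRing B] [Algebra K B] where
  bracket : B →ₗ[K] B →ₗ[K] B
  antisymm : ∀ a b : B, bracket a b = - bracket b a
  jacobi : ∀ a b c : B,
    bracket a (bracket b c) + bracket b (bracket c a) + bracket c (bracket a b) = 0
  leibniz : ∀ a b c : B, bracket a (b * c) = bracket a b * c + b * bracket a c


lemma deriv_aeval_chain {K B : Type*} [CommRing K] [CommRing B] [Algebra K B]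
    {M : ℕ} (D : Derivation K B B) (g : Fin M → B) (p : MvPolynomial (Fin M) K) :
    D (MvPolynomial.aeval g p) =
      ∑ α, MvPolynomial.aeval g (MvPolynomial.pderiv α p) * D (g α) := by
  induction p using MvPolynomial.induction_on with
  | C a => simp
  | add p q hp hq => simp [hp, hq, Finset.sum_add_distrib, add_mul]
  | mul_X p i hp =>
      have h1 : ∀ α, MvPolynomial.aeval g (MvPolynomial.pderiv α (p * MvPolynomial.X i)) =
          MvPolynomial.aeval g (MvPolynomial.pderiv α p) * g i +
          (if α = i then MvPolynomial.aeval g p else 0) := by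
        intro α
        rw [MvPolynomial.pderiv_mul]
        by_cases h : α = i
        · subst h; simp [MvPolynomial.pderiv_X_self]
        · simp [MvPolynomial.pderiv_X_of_ne (Ne.symm h), h]
      simp only [h1, add_mul, Finset.sum_add_distrib, ite_mul, zero_mul,
        Finset.sum_ite_eq', Finset.mem_univ, if_true]
      rw [map_mul, MvPolynomial.aeval_X, D.leibniz, smul_eq_mul, smul_eq_mul, hp,
        Finset.mul_sum]
      rw [add_comm]
      congr 1
      exact Finset.sum_congr rfl fun α _ => by ring

/-- If the loop coproducts satisfy relation (p1), then the image of any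
formal Casimir of `F` under `Δ i λ` Poisson-commutes with every generator image
`Δ k μ β` for `k > i`. -/
theorem loop_coproduct_casimir_generator
    {K B : Type*} [Field K] [CharZero K] [CommRing B] [Algebra K B]
    (P : PoissonStructure K B) {M : ℕ} (hM : 0 < M) {Λ : Type*}
    (F : Fin M → Fin M → MvPolynomial (Fin M) K)
    (Δ : ℕ → Λ → Fin M → B)
    (f : ℕ → ℕ → Λ → Λ → Fin M → Fin M → B)
    (hp1 : ∀ (i k : ℕ), i < k → ∀ (l m : Λ) (α β : Fin M),
      P.bracket (Δ i l α) (Δ k m β) =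
        ∑ γ, f i k l m β γ * MvPolynomial.aeval (Δ i l) (F α γ))
    (C : MvPolynomial (Fin M) K)
    (hC : ∀ β : Fin M, ∑ α, MvPolynomial.pderiv α C * F α β = 0) :
    ∀ (i k : ℕ), i < k → ∀ (l m : Λ) (β : Fin M),
      P.bracket (MvPolynomial.aeval (Δ i l) C) (Δ k m β) = 0 := by
  intro i k hik l m β
  have h1 : P.bracket 1 (Δ k m β) = 0 := by
    have := P.leibniz (Δ k m β) 1 1
    rw [mul_one, mul_one] at this
    rw [one_mul] at this
    have h0 : P.bracket (Δ k m β) 1 = 0 :=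
      (add_left_cancel (a := P.bracket (Δ k m β) 1)
        (by rw [add_zero]; exact this)).symm
    rw [P.antisymm, h0, neg_zero]
  let D : Derivation K B B :=
    { toLinearMap := P.bracket.flip (Δ k m β)
      map_one_eq_zero' := h1
      leibniz' := fun a b => by
        simp only [LinearMap.flip_apply, smul_eq_mul]
        rw [P.antisymm (a * b), P.leibniz, P.antisymm (Δ k m β) a, P.antisymm (Δ k m β) b]
        ring }
  have hD : ∀ b : B, D b = P.bracket b (Δ k m β) := fun b => rfl
  rw [← hD, deriv_aeval_chain D (Δ i l) C]
  simp only [hD, hp1 i k hik l m, Finset.mul_sum]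
  rw [Finset.sum_comm]
  refine Finset.sum_eq_zero fun γ _ => ?_
  have : ∀ α : Fin M, MvPolynomial.aeval (Δ i l) (MvPolynomial.pderiv α C) *
      (f i k l m β γ * MvPolynomial.aeval (Δ i l) (F α γ)) =
      f i k l m β γ * MvPolynomial.aeval (Δ i l) (MvPolynomial.pderiv α C * F α γ) := by
    intro α; rw [map_mul]; ring
  simp only [this, ← Finset.mul_sum, ← map_sum, hC γ, map_zero, mul_zero]
end

section
/- Let K be a field, B a Poisson algebra over K, n and M positive integers, and X : Fin M → Matrix (Fin n) (Fin n) K matrices satisfying Tr(X α * X β) = δ_{αβ} and [X α, X β] = Σ_γ (c α β γ) • X γ for completely antisymmetric structure constants c : Fin M → Fin M → Fin M → K (i.e. c α β γ = −c β α γ and c α β γ = −c α γ β). Let Λ be a type, y : Fin M → Λ → B, f : Fin M → Λ → Λ → K, and set L λ := Σ_α (y α λ) • (X α), regarded as an n×n matrix with entries in B via the algebra map K → B. Suppose that for all λ, μ ∈ Λ the linear r-matrix relation holds entrywise: {L λ ⊗ 1, 1 ⊗ L μ} + [r λ μ , (L λ) ⊗ 1 + 1 ⊗ (L μ)] = 0,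 where r λ μ := Σ_α (f α λ μ) • ((X α) ⊗ (X α)), ⊗ denotes the Kronecker product (with 1 the identity matrix), and {L λ ⊗ 1, 1 ⊗ L μ} denotes the n²×n² matrix whose ((i,k),(j,l)) entry is {(L λ)_{i j}, (L μ)_{k l}}. Then for all α, β ∈ Fin M and all λ, μ ∈ Λ: {y α λ, y β μ} = Σ_δ (c α β δ) • ((f α λ μ) • (y δ μ) − (f β λ μ) • (y δ λ)). -/
open scoped BigOperators

open scoped Kronecker

/-- the entrywise linear r-matrix relation for the Lax matrix
`L λ = Σ_α (y α λ) • X α` implies the generalized Gaudin algebra relations for the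
generators `y α λ`. -/
theorem gaudin_algebra_from_rmatrix
    {K B : Type*} [Field K] [CommRing B] [Algebra K B]
    (P : PoissonStructure K B) {n M : ℕ} (hn : 0 < n) (hM : 0 < M)
    (X : Fin M → Matrix (Fin n) (Fin n) K)
    (c : Fin M → Fin M → Fin M → K)
    (horth : ∀ α β, (X α * X β).trace = if α = β then 1 else 0)
    (hcomm : ∀ α β, X α * X β - X β * X α = ∑ γ, c α β γ • X γ)
    (hc1 : ∀ α β γ, c α β γ = - c β α γ)
    (hc2 : ∀ α β γ, c α β γ = - c α γ β)
    {Λ : Type*} (y : Fin M → Λ → B) (f : Fin M → Λ → Λ → K)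
    (L : Λ → Matrix (Fin n) (Fin n) B)
    (hL : ∀ l, L l = ∑ α, y α l • (X α).map (algebraMap K B))
    (r : Λ → Λ → Matrix (Fin n × Fin n) (Fin n × Fin n) K)
    (hr : ∀ l m, r l m = ∑ α, f α l m • (X α ⊗ₖ X α))
    (hrmat : ∀ l m : Λ,
      (Matrix.of fun p q : Fin n × Fin n =>
          P.bracket (L l p.1 q.1) (L m p.2 q.2))
        + ((r l m).map (algebraMap K B) *
              (L l ⊗ₖ (1 : Matrix (Fin n) (Fin n) B)
                + (1 : Matrix (Fin n) (Fin n) B) ⊗ₖ L m)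
            - (L l ⊗ₖ (1 : Matrix (Fin n) (Fin n) B)
                + (1 : Matrix (Fin n) (Fin n) B) ⊗ₖ L m) *
              (r l m).map (algebraMap K B)) = 0) :
    ∀ (α β : Fin M) (l m : Λ),
      P.bracket (y α l) (y β m) =
        ∑ δ, c α β δ • (f α l m • y δ m - f β l m • y δ l) := by
  intro α β l m
  set φ : K →+* B := algebraMap K B with hφ
  set Xb : Fin M → Matrix (Fin n) (Fin n) B := fun γ => (X γ).map φ with hXb
  -- basic facts
  have htrmap : ∀ {m' : Type} [Fintype m'] (A : Matrix m' m' K),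
      (A.map ⇑φ).trace = φ A.trace := by
    intro m' _ A
    simp [Matrix.trace, Matrix.map_apply, Matrix.diag, map_sum]
  have hmapsub : ∀ (A C : Matrix (Fin n) (Fin n) K),
      (A - C).map ⇑φ = A.map ⇑φ - C.map ⇑φ := by
    intro A C; ext i j; simp [Matrix.map_apply]
  have horthB : ∀ γ δ, (Xb γ * Xb δ).trace = if γ = δ then (1:B) else 0 := by
    intro γ δ
    rw [hXb]
    simp only
    rw [← Matrix.map_mul, htrmap, horth]
    split <;> simp
  have hcommB : ∀ γ δ, Xb γ * Xb δ - Xb δ * Xb γ = ∑ ε, c γ δ ε • Xb ε := by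
    intro γ δ
    rw [hXb]
    simp only
    rw [← Matrix.map_mul, ← Matrix.map_mul, ← hmapsub, hcomm]
    ext i j
    simp only [Matrix.sum_apply, Matrix.smul_apply, Matrix.map_apply]
    rw [map_sum]
    refine Finset.sum_congr rfl fun ε _ => ?_
    rw [smul_eq_mul, map_mul, Algebra.smul_def]
  -- the matrices
  set W : Matrix (Fin n × Fin n) (Fin n × Fin n) B :=
    Matrix.of (fun p q : Fin n × Fin n => P.bracket (L l p.1 q.1) (L m p.2 q.2)) with hW
  set S : Matrix (Fin n × Fin n) (Fin n × Fin n) B :=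
    L l ⊗ₖ (1 : Matrix (Fin n) (Fin n) B) + (1 : Matrix (Fin n) (Fin n) B) ⊗ₖ L m with hS
  set R : Matrix (Fin n × Fin n) (Fin n × Fin n) B := (r l m).map φ with hR
  set A : Matrix (Fin n × Fin n) (Fin n × Fin n) B := Xb α ⊗ₖ Xb β with hA
  have hWeq : W = S * R - R * S := by
    have h := hrmat l m
    rw [← hW, ← hS, ← hR] at h
    have h2 : W = -(R * S - S * R) := by
      rw [← add_eq_zero_iff_eq_neg']
      rw [add_comm]
      exact h
    rw [h2, neg_sub]
  -- recovery of the generators from the Lax matrix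
  have hLe : ∀ (l' : Λ) (i j : Fin n), L l' i j = ∑ δ, y δ l' • φ (X δ i j) := by
    intro l' i j
    rw [hL]
    simp [Matrix.sum_apply, Matrix.smul_apply, Matrix.map_apply]
  have hrec : ∀ (γ : Fin M) (l' : Λ), (∑ i, ∑ j, X γ j i • L l' i j) = y γ l' := by
    intro γ l'
    have key : ∀ δ : Fin M,
        (∑ i, ∑ j, X γ j i • (y δ l' • φ (X δ i j))) = (if γ = δ then (1:K) else 0) • y δ l' := by
      intro δ
      have e : ∀ i j : Fin n, X γ j i • (y δ l' • φ (X δ i j)) = (X γ j i * X δ i j) • y δ l' := by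
        intro i j
        rw [smul_comm, smul_eq_mul, Algebra.smul_def, Algebra.smul_def, map_mul]
        ring
      have tr : (∑ i : Fin n, ∑ j : Fin n, X γ j i * X δ i j) = if γ = δ then 1 else 0 := by
        rw [← horth γ δ, Matrix.trace]
        simp only [Matrix.diag, Matrix.mul_apply]
        exact Finset.sum_comm
      simp only [e, ← Finset.sum_smul]
      rw [tr]
    calc ∑ i, ∑ j, X γ j i • L l' i j
        = ∑ i, ∑ j, ∑ δ, X γ j i • (y δ l' • φ (X δ i j)) := by
          simp only [hLe, Finset.smul_sum]
      _ = ∑ i, ∑ δ, ∑ j, X γ j i • (y δ l' • φ (X δ i j)) :=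
          Finset.sum_congr rfl fun i _ => Finset.sum_comm
      _ = ∑ δ, ∑ i, ∑ j, X γ j i • (y δ l' • φ (X δ i j)) := Finset.sum_comm
      _ = ∑ δ, (if γ = δ then (1:K) else 0) • y δ l' := by
          exact Finset.sum_congr rfl fun δ _ => key δ
      _ = y γ l' := by simp
  -- step 1 : bracket as trace
  have step1 : P.bracket (y α l) (y β m) = (W * A).trace := by
    have hAentry : ∀ (q p : Fin n × Fin n), A q p = φ (X α q.1 p.1) * φ (X β q.2 p.2) := by
      intro q p
      simp [hA, hXb, Matrix.kroneckerMap_apply, Matrix.map_apply]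
    have htr : (W * A).trace = ∑ i, ∑ k, ∑ j, ∑ o,
        P.bracket (L l i j) (L m k o) * (φ (X α j i) * φ (X β o k)) := by
      rw [Matrix.trace]
      simp only [Matrix.diag, Matrix.mul_apply, hAentry, hW, Matrix.of_apply]
      rw [Fintype.sum_prod_type]
      refine Finset.sum_congr rfl fun i _ => Finset.sum_congr rfl fun k _ => ?_
      rw [Fintype.sum_prod_type]
    have htr2 : (W * A).trace = ∑ k, ∑ o, ∑ i, ∑ j,
        P.bracket (L l i j) (L m k o) * (φ (X α j i) * φ (X β o k)) := by
      rw [htr]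
      calc (∑ i, ∑ k, ∑ j, ∑ o, P.bracket (L l i j) (L m k o) * (φ (X α j i) * φ (X β o k)))
          = ∑ k, ∑ i, ∑ j, ∑ o, P.bracket (L l i j) (L m k o) * (φ (X α j i) * φ (X β o k)) :=
            Finset.sum_comm
        _ = ∑ k, ∑ i, ∑ o, ∑ j, P.bracket (L l i j) (L m k o) * (φ (X α j i) * φ (X β o k)) :=
            Finset.sum_congr rfl fun k _ => Finset.sum_congr rfl fun i _ => Finset.sum_comm
        _ = ∑ k, ∑ o, ∑ i, ∑ j, P.bracket (L l i j) (L m k o) * (φ (X α j i) * φ (X β o k)) :=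
            Finset.sum_congr rfl fun k _ => Finset.sum_comm
    rw [htr2, ← hrec α l, ← hrec β m]
    simp only [map_sum, LinearMap.sum_apply, map_smul, LinearMap.smul_apply, Finset.smul_sum]
    refine Finset.sum_congr rfl fun k _ => Finset.sum_congr rfl fun o _ =>
      Finset.sum_congr rfl fun i _ => Finset.sum_congr rfl fun j _ => ?_
    rw [Algebra.smul_def, Algebra.smul_def]
    ring
  -- step 2 : trace identity
  have step2 : (W * A).trace = (R * (A * S - S * A)).trace := by
    rw [hWeq, Matrix.sub_mul, Matrix.trace_sub, Matrix.mul_sub, Matrix.trace_sub,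
      Matrix.mul_assoc, Matrix.trace_mul_comm (S) (R * A), Matrix.mul_assoc, Matrix.mul_assoc]
  -- step 3 : compute A * S - S * A
  have hsubk : ∀ (A₁ A₂ D : Matrix (Fin n) (Fin n) B),
      (A₁ - A₂) ⊗ₖ D = A₁ ⊗ₖ D - A₂ ⊗ₖ D := by
    intro A₁ A₂ D
    ext ⟨i, k⟩ ⟨j, o⟩
    simp [Matrix.kroneckerMap_apply, sub_mul]
  have hksub : ∀ (D A₁ A₂ : Matrix (Fin n) (Fin n) B),
      D ⊗ₖ (A₁ - A₂) = D ⊗ₖ A₁ - D ⊗ₖ A₂ := by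
    intro D A₁ A₂
    ext ⟨i, k⟩ ⟨j, o⟩
    simp [Matrix.kroneckerMap_apply, mul_sub]
  have hsumk : ∀ {ι : Type} (s : Finset ι) (F : ι → Matrix (Fin n) (Fin n) B)
      (D : Matrix (Fin n) (Fin n) B), (∑ x ∈ s, F x) ⊗ₖ D = ∑ x ∈ s, F x ⊗ₖ D := by
    intro ι s F D
    ext ⟨i, k⟩ ⟨j, o⟩
    simp [Matrix.kroneckerMap_apply, Matrix.sum_apply, Finset.sum_mul]
  have hksum : ∀ {ι : Type} (s : Finset ι) (F : ι → Matrix (Fin n) (Fin n) B)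
      (D : Matrix (Fin n) (Fin n) B), D ⊗ₖ (∑ x ∈ s, F x) = ∑ x ∈ s, D ⊗ₖ F x := by
    intro ι s F D
    ext ⟨i, k⟩ ⟨j, o⟩
    simp [Matrix.kroneckerMap_apply, Matrix.sum_apply, Finset.mul_sum]
  have step3 : A * S - S * A =
      (∑ δ, y δ l • ((∑ ε, c α δ ε • Xb ε) ⊗ₖ Xb β))
        + (∑ δ, y δ m • (Xb α ⊗ₖ (∑ ε, c β δ ε • Xb ε))) := by
    have h1 : A * S - S * A =
        (Xb α * L l - L l * Xb α) ⊗ₖ Xb β + Xb α ⊗ₖ (Xb β * L m - L m * Xb β) := by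
      simp only [hA, hS, Matrix.mul_add, Matrix.add_mul, ← Matrix.mul_kronecker_mul,
        Matrix.mul_one, Matrix.one_mul, hsubk, hksub]
      abel
    rw [h1]
    congr 1
    · rw [hL l, Finset.mul_sum, Finset.sum_mul, ← Finset.sum_sub_distrib, hsumk]
      refine Finset.sum_congr rfl fun δ _ => ?_
      have : (X δ).map ⇑φ = Xb δ := rfl
      rw [this, mul_smul_comm, smul_mul_assoc, ← smul_sub, hcommB, Matrix.smul_kronecker]
    · rw [hL m, Finset.mul_sum, Finset.sum_mul, ← Finset.sum_sub_distrib, hksum]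
      refine Finset.sum_congr rfl fun δ _ => ?_
      have : (X δ).map ⇑φ = Xb δ := rfl
      rw [this, mul_smul_comm, smul_mul_assoc, ← smul_sub, hcommB, Matrix.kronecker_smul]
  -- step 4 : compute the trace of R times that
  have hRB : R = ∑ γ, f γ l m • (Xb γ ⊗ₖ Xb γ) := by
    rw [hR, hr]
    ext ⟨i, k⟩ ⟨j, o⟩
    simp only [Matrix.map_apply, Matrix.sum_apply, Matrix.smul_apply,
      Matrix.kroneckerMap_apply, hXb]
    rw [map_sum]
    refine Finset.sum_congr rfl fun γ _ => ?_
    rw [smul_eq_mul, map_mul, map_mul, Algebra.smul_def]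
  have htrE : ∀ (γ : Fin M) (d : Fin M → K),
      (Xb γ * ∑ ε, d ε • Xb ε).trace = algebraMap K B (d γ) := by
    intro γ d
    rw [Finset.mul_sum, Matrix.trace_sum]
    simp only [mul_smul_comm, Matrix.trace_smul, horthB]
    simp [smul_ite, Algebra.algebraMap_eq_smul_one]
  have hkey1 : ∀ δ : Fin M, (R * ((∑ ε, c α δ ε • Xb ε) ⊗ₖ Xb β)).trace
      = algebraMap K B (f β l m * c α δ β) := by
    intro δ
    rw [hRB, Finset.sum_mul, Matrix.trace_sum]
    have e : ∀ γ : Fin M,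
        ((f γ l m • (Xb γ ⊗ₖ Xb γ)) * ((∑ ε, c α δ ε • Xb ε) ⊗ₖ Xb β)).trace
          = f γ l m • (algebraMap K B (c α δ γ) * (if γ = β then (1 : B) else 0)) := by
      intro γ
      rw [Matrix.smul_mul, Matrix.trace_smul, ← Matrix.mul_kronecker_mul,
        Matrix.trace_kronecker, htrE, horthB]
    simp only [e]
    simp [mul_ite, smul_ite, Finset.sum_ite_eq', Algebra.smul_def, map_mul, mul_comm]
  have hkey2 : ∀ δ : Fin M, (R * (Xb α ⊗ₖ (∑ ε, c β δ ε • Xb ε))).trace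
      = algebraMap K B (f α l m * c β δ α) := by
    intro δ
    rw [hRB, Finset.sum_mul, Matrix.trace_sum]
    have e : ∀ γ : Fin M,
        ((f γ l m • (Xb γ ⊗ₖ Xb γ)) * (Xb α ⊗ₖ (∑ ε, c β δ ε • Xb ε))).trace
          = f γ l m • ((if γ = α then (1 : B) else 0) * algebraMap K B (c β δ γ)) := by
      intro γ
      rw [Matrix.smul_mul, Matrix.trace_smul, ← Matrix.mul_kronecker_mul,
        Matrix.trace_kronecker, htrE, horthB]
    simp only [e]
    simp [mul_ite, ite_mul, smul_ite, Finset.sum_ite_eq', Algebra.smul_def, map_mul, mul_comm]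
  have step4 : (R * (A * S - S * A)).trace =
      ∑ δ, ((c α δ β * f β l m) • y δ l + (c β δ α * f α l m) • y δ m) := by
    rw [step3, Matrix.mul_add, Matrix.trace_add, Finset.mul_sum, Finset.mul_sum,
      Matrix.trace_sum, Matrix.trace_sum, ← Finset.sum_add_distrib]
    refine Finset.sum_congr rfl fun δ _ => ?_
    rw [mul_smul_comm, mul_smul_comm, Matrix.trace_smul, Matrix.trace_smul, hkey1, hkey2]
    simp only [smul_eq_mul, Algebra.smul_def, map_mul]
    ring
  rw [step1, step2, step4]
  apply Finset.sum_congr rfl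
  intro δ _
  have e1 : c α δ β = - c α β δ := by rw [hc2]
  have e2 : c β δ α = c α β δ := by rw [hc1 β δ α, hc2 δ β α, hc1 δ α β, hc2 α δ β]; ring
  rw [e1, e2, smul_sub, neg_mul, neg_smul, smul_smul, smul_smul]
  abel
end

section
/- Under the Lie–Poisson realization hypotheses, let ε : Fin N → K be injective, let k : Fin M → K be constants, and for λ ∈ K with λ ≠ ε i for all i define Δ_λ(α) := Σ_i (λ − ε i)⁻¹ • (y α i) + algebraMap K B (k α). Then for all λ ≠ μ (both different from every ε i) and all α, β ∈ Fin M: {Δ_λ(α), Δ_μ(β)} = (μ − λ)⁻¹ • Σ_γ (c α β γ) • (Δ_λ(γ) − Δ_μ(γ)) (the defining relation of the rational Gaudin algebra). -/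
open scoped BigOperators

/-! Only the diagonal brackets `{y α i, y β i}` survive in `{Δ_λ(α), Δ_μ(β)}`, the constants being
Casimirs, and each carries the weight `(λ - ε i)⁻¹ (μ - ε i)⁻¹`. The partial fraction identity
`(λ - e)⁻¹ (μ - e)⁻¹ = (μ - λ)⁻¹ ((λ - e)⁻¹ - (μ - e)⁻¹)` turns these weights into the
coefficients of `Δ_λ(γ) - Δ_μ(γ)`. -/

open Finset

theorem LinearMap.sum_smul_apply_sum_smul_of_apply_eq_zero {R P₁ P₂ Q ι : Type*} [CommSemiring R]
    [AddCommMonoid P₁] [AddCommMonoid P₂] [AddCommMonoid Q] [Module R P₁] [Module R P₂]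
    [Module R Q] [Fintype ι] (f : P₁ →ₗ[R] P₂ →ₗ[R] Q) (u : ι → P₁) (v : ι → P₂)
    (h : ∀ i j, i ≠ j → f (u i) (v j) = 0) (a b : ι → R) :
    f (∑ i, a i • u i) (∑ j, b j • v j) = ∑ i, (a i * b i) • f (u i) (v i) := by
  simp only [map_sum, map_smul, LinearMap.sum_apply, LinearMap.smul_apply]
  refine sum_congr rfl fun i _ => ?_
  rw [sum_eq_single i (fun j _ hji => by rw [h j i hji, smul_zero])
    (by simp), smul_smul, mul_comm]

theorem inv_sub_mul_inv_sub {K : Type*} [Field K] {l m e : K} (hlm : l ≠ m) (hl : l ≠ e)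
    (hm : m ≠ e) : (l - e)⁻¹ * (m - e)⁻¹ = (m - l)⁻¹ * ((l - e)⁻¹ - (m - e)⁻¹) := by
  have hl' : l - e ≠ 0 := sub_ne_zero.mpr hl
  have hm' : m - e ≠ 0 := sub_ne_zero.mpr hm
  have hml : m - l ≠ 0 := sub_ne_zero.mpr hlm.symm
  field_simp
  ring

namespace PoissonStructure

variable {K B : Type*} [CommRing K] [CommRing B] [Algebra K B] (P : PoissonStructure K B)

theorem bracket_one (a : B) : P.bracket a 1 = 0 := by
  simpa using P.leibniz a 1 1

theorem bracket_algebraMap (a : B) (r : K) : P.bracket a (algebraMap K B r) = 0 := by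
  rw [Algebra.algebraMap_eq_smul_one, map_smul, bracket_one, smul_zero]

theorem algebraMap_bracket (r : K) (b : B) : P.bracket (algebraMap K B r) b = 0 := by
  rw [P.antisymm, bracket_algebraMap, neg_zero]

theorem bracket_add_algebraMap_add_algebraMap (a b : B) (r s : K) :
    P.bracket (a + algebraMap K B r) (b + algebraMap K B s) = P.bracket a b := by
  simp only [map_add, LinearMap.add_apply, bracket_algebraMap, algebraMap_bracket, add_zero]

theorem bracket_sum_smul_sum_smul {M N : ℕ} (c : Fin M → Fin M → Fin M → K)
    (y : Fin M → Fin N → B)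
    (hsep : ∀ (α β : Fin M) (i j : Fin N), i ≠ j → P.bracket (y α i) (y β j) = 0)
    (hsame : ∀ (α β : Fin M) (i : Fin N), P.bracket (y α i) (y β i) = ∑ γ, c α β γ • y γ i)
    (a b : Fin N → K) (α β : Fin M) :
    P.bracket (∑ i, a i • y α i) (∑ i, b i • y β i) =
      ∑ γ, c α β γ • ∑ i, (a i * b i) • y γ i := by
  rw [P.bracket.sum_smul_apply_sum_smul_of_apply_eq_zero _ _ (hsep α β)]
  simp only [hsame, smul_sum, smul_smul]
  rw [sum_comm]
  simp only [mul_comm]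

end PoissonStructure

theorem rational_gaudin_algebra_relation_general
    {K B : Type*} [Field K] [CommRing B] [Algebra K B]
    (P : PoissonStructure K B) {M N : ℕ}
    (c : Fin M → Fin M → Fin M → K)
    (y : Fin M → Fin N → B)
    (hsep : ∀ (α β : Fin M) (i j : Fin N), i ≠ j → P.bracket (y α i) (y β j) = 0)
    (hsame : ∀ (α β : Fin M) (i : Fin N),
      P.bracket (y α i) (y β i) = ∑ γ, c α β γ • y γ i)
    (ε : Fin N → K)
    (k : Fin M → K)
    (Δ : K → Fin M → B)
    (hΔ : ∀ (l : K) (α : Fin M),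
      Δ l α = (∑ i, (l - ε i)⁻¹ • y α i) + algebraMap K B (k α)) :
    ∀ (l m : K), l ≠ m → (∀ i, l ≠ ε i) → (∀ i, m ≠ ε i) →
      ∀ (α β : Fin M),
        P.bracket (Δ l α) (Δ m β) =
          (m - l)⁻¹ • ∑ γ, c α β γ • (Δ l γ - Δ m γ) := by
  intro l m hlm hl hm α β
  have hdiff : ∀ γ, Δ l γ - Δ m γ = ∑ i, ((l - ε i)⁻¹ - (m - ε i)⁻¹) • y γ i := fun γ => by
    rw [hΔ, hΔ, add_sub_add_right_eq_sub, ← sum_sub_distrib]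
    simp only [sub_smul]
  rw [hΔ, hΔ, P.bracket_add_algebraMap_add_algebraMap,
    P.bracket_sum_smul_sum_smul c y hsep hsame]
  simp only [hdiff, inv_sub_mul_inv_sub hlm (hl _) (hm _), smul_sum, ← smul_assoc, smul_eq_mul,
    mul_left_comm (m - l)⁻¹]

/-- the rational Gaudin loop coproduct
`Δ_λ(α) = Σ_i (λ - ε i)⁻¹ • y α i + k α` satisfies the defining relations of the
rational Gaudin algebra. -/
theorem rational_gaudin_algebra_relation
    {K B : Type*} [Field K] [CharZero K] [CommRing B] [Algebra K B]
    (P : PoissonStructure K B) {M N : ℕ} (hM : 0 < M) (hN : 0 < N)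
    (c : Fin M → Fin M → Fin M → K)
    (y : Fin M → Fin N → B)
    (hsep : ∀ (α β : Fin M) (i j : Fin N), i ≠ j → P.bracket (y α i) (y β j) = 0)
    (hsame : ∀ (α β : Fin M) (i : Fin N),
      P.bracket (y α i) (y β i) = ∑ γ, c α β γ • y γ i)
    (ε : Fin N → K) (hε : Function.Injective ε)
    (k : Fin M → K)
    (Δ : K → Fin M → B)
    (hΔ : ∀ (l : K) (α : Fin M),
      Δ l α = (∑ i, (l - ε i)⁻¹ • y α i) + algebraMap K B (k α)) :
    ∀ (l m : K), l ≠ m → (∀ i, l ≠ ε i) → (∀ i, m ≠ ε i) →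
      ∀ (α β : Fin M),
        P.bracket (Δ l α) (Δ m β) =
          (m - l)⁻¹ • ∑ γ, c α β γ • (Δ l γ - Δ m γ) :=
  rational_gaudin_algebra_relation_general P c y hsep hsame ε k Δ hΔ
end

section
/- Under the Lie–Poisson realization hypotheses, define the primitive m-th coproducts Δ^(m)(α) := Σ_{i=1}^{m} y α i for 1 ≤ m ≤ N. Then for all 1 ≤ i ≤ j ≤ N and all α, β ∈ Fin M: {Δ^(i)(α), Δ^(j)(β)} = Σ_γ (c α β γ) • Δ^(i)(γ). -/
open scoped BigOperators

/-- the primitive m-th coproducts `Δ^(m)(α) = Σ_{i=1}^m y α i` satisfy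
`{Δ^(i)(α), Δ^(j)(β)} = Σ_γ c α β γ • Δ^(i)(γ)` for `1 ≤ i ≤ j ≤ N`. -/
theorem primitive_coproducts_relation
    {K B : Type*} [Field K] [CharZero K] [CommRing B] [Algebra K B]
    (P : PoissonStructure K B) {M N : ℕ} (hM : 0 < M) (hN : 0 < N)
    (c : Fin M → Fin M → Fin M → K)
    (y : Fin M → Fin N → B)
    (hsep : ∀ (α β : Fin M) (i j : Fin N), i ≠ j → P.bracket (y α i) (y β j) = 0)
    (hsame : ∀ (α β : Fin M) (i : Fin N),
      P.bracket (y α i) (y β i) = ∑ γ, c α β γ • y γ i)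
    (D : ℕ → Fin M → B)
    (hD : ∀ (m : ℕ) (α : Fin M),
      D m α = ∑ i ∈ Finset.univ.filter (fun i : Fin N => (i : ℕ) < m), y α i) :
    ∀ (i j : ℕ), 1 ≤ i → i ≤ j → j ≤ N →
      ∀ (α β : Fin M),
        P.bracket (D i α) (D j β) = ∑ γ, c α β γ • D i γ := by
  intro i j hi hij hjN α β
  simp only [hD, map_sum, LinearMap.sum_apply]
  rw [Finset.sum_comm]
  have key : ∀ k ∈ Finset.univ.filter (fun k : Fin N => (k : ℕ) < i),
      (∑ l ∈ Finset.univ.filter (fun l : Fin N => (l : ℕ) < j),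
        P.bracket (y α k) (y β l)) = ∑ γ, c α β γ • y γ k := by
    intro k hk
    simp only [Finset.mem_filter, Finset.mem_univ, true_and] at hk
    rw [Finset.sum_eq_single k]
    · exact hsame α β k
    · intro l hl hlk
      exact hsep α β k l (Ne.symm hlk)
    · intro h
      simp only [Finset.mem_filter, Finset.mem_univ, true_and] at h
      exact absurd (lt_of_lt_of_le hk hij) h
  rw [Finset.sum_congr rfl key, Finset.sum_comm]
  simp [Finset.smul_sum]
end

section
/- Under the Lie–Poisson realization hypotheses, define the primitive m-th coproducts Δ^(m)(α) := Σ_{i=1}^{m} y α i for 1 ≤ m ≤ N, and let C, C' be formal Casimirs for c. Then: (a) for all 1 ≤ m ≤ n ≤ N and all β ∈ Fin M, {(aeval Δ^(m)) C, Δ^(n)(β)} = 0; and (b) for all 1 ≤ m, n ≤ N, {(aeval Δ^(m)) C, (aeval Δ^(n)) C'} = 0 (the involutive family produced by the coproduct method). -/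
open scoped BigOperators

section Aux

variable {K B : Type*} [Field K] [CharZero K] [CommRing B] [Algebra K B]

lemma PoissonStructure.bracket_one_right (P : PoissonStructure K B) (b : B) :
    P.bracket b 1 = 0 := by
  have h := P.leibniz b 1 1
  rw [mul_one, mul_one, one_mul] at h
  have := add_left_cancel (a := P.bracket b 1) (b := 0) (c := P.bracket b 1)
  exact (this (by rw [add_zero]; exact h)).symm

lemma PoissonStructure.bracket_algebraMap_left (P : PoissonStructure K B) (k : K) (b : B) :
    P.bracket (algebraMap K B k) b = 0 := by
  rw [Algebra.algebraMap_eq_smul_one, map_smul, LinearMap.smul_apply,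
    P.antisymm 1 b, P.bracket_one_right, neg_zero, smul_zero]

lemma PoissonStructure.leibniz_left (P : PoissonStructure K B) (a b c : B) :
    P.bracket (a * b) c = P.bracket a c * b + a * P.bracket b c := by
  rw [P.antisymm (a * b) c, P.leibniz, P.antisymm a c, P.antisymm b c]
  ring

/-- Chain rule for the Poisson bracket of a polynomial evaluation. -/
lemma PoissonStructure.bracket_aeval (P : PoissonStructure K B) {M : ℕ}
    (Δ : Fin M → B) (b : B) (p : MvPolynomial (Fin M) K) :
    P.bracket (MvPolynomial.aeval Δ p) b
      = ∑ α, MvPolynomial.aeval Δ (MvPolynomial.pderiv α p) * P.bracket (Δ α) b := by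
  induction p using MvPolynomial.induction_on with
  | C k =>
      simp [MvPolynomial.aeval_C, P.bracket_algebraMap_left, MvPolynomial.pderiv_C]
  | add p q hp hq =>
      simp only [map_add, LinearMap.map_add, LinearMap.add_apply, hp, hq, add_mul,
        Finset.sum_add_distrib]
  | mul_X p i hp =>
      have hder : ∀ α : Fin M, MvPolynomial.pderiv α (p * MvPolynomial.X i)
          = MvPolynomial.pderiv α p * MvPolynomial.X i + if α = i then p else 0 := by
        intro α
        rw [MvPolynomial.pderiv_mul]
        by_cases h : α = i
        · subst h; simp
        · simp [MvPolynomial.pderiv_X_of_ne (Ne.symm h), h]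
      calc P.bracket (MvPolynomial.aeval Δ (p * MvPolynomial.X i)) b
          = P.bracket (MvPolynomial.aeval Δ p * Δ i) b := by
            rw [map_mul, MvPolynomial.aeval_X]
        _ = P.bracket (MvPolynomial.aeval Δ p) b * Δ i
              + MvPolynomial.aeval Δ p * P.bracket (Δ i) b := P.leibniz_left _ _ _
        _ = (∑ α, MvPolynomial.aeval Δ (MvPolynomial.pderiv α p) * P.bracket (Δ α) b) * Δ i
              + MvPolynomial.aeval Δ p * P.bracket (Δ i) b := by rw [hp]
        _ = ∑ α, MvPolynomial.aeval Δ (MvPolynomial.pderiv α (p * MvPolynomial.X i))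
              * P.bracket (Δ α) b := by
            have key : ∀ α : Fin M,
                MvPolynomial.aeval Δ (MvPolynomial.pderiv α (p * MvPolynomial.X i))
                    * P.bracket (Δ α) b
                  = MvPolynomial.aeval Δ (MvPolynomial.pderiv α p) * P.bracket (Δ α) b * Δ i
                    + (if α = i then MvPolynomial.aeval Δ p * P.bracket (Δ α) b else 0) := by
              intro α
              rw [hder α, map_add, map_mul, MvPolynomial.aeval_X,
                apply_ite (MvPolynomial.aeval Δ), map_zero]
              by_cases h : α = i <;> simp [h] <;> ring
            rw [Finset.sum_congr rfl fun α _ => key α, Finset.sum_add_distrib,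
              Finset.sum_ite_eq' Finset.univ i
                (fun α => MvPolynomial.aeval Δ p * P.bracket (Δ α) b),
              if_pos (Finset.mem_univ i), Finset.sum_mul]

end Aux

section Main

variable {K B : Type*} [Field K] [CharZero K] [CommRing B] [Algebra K B]

variable (P : PoissonStructure K B) {M N : ℕ}
    (c : Fin M → Fin M → Fin M → K) (y : Fin M → Fin N → B)
    (D : ℕ → Fin M → B)

lemma bracket_D_y
    (hsep : ∀ (α β : Fin M) (i j : Fin N), i ≠ j → P.bracket (y α i) (y β j) = 0)
    (hD : ∀ (m : ℕ) (α : Fin M),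
      D m α = ∑ i ∈ Finset.univ.filter (fun i : Fin N => (i : ℕ) < m), y α i)
    (m : ℕ) (α β : Fin M) (j : Fin N) (hj : m ≤ (j : ℕ)) :
    P.bracket (D m α) (y β j) = 0 := by
  rw [hD, map_sum, LinearMap.sum_apply]
  refine Finset.sum_eq_zero fun i hi => ?_
  simp only [Finset.mem_filter] at hi
  exact hsep α β i j (by intro h; rw [h] at hi; omega)

lemma bracket_D_D
    (hsep : ∀ (α β : Fin M) (i j : Fin N), i ≠ j → P.bracket (y α i) (y β j) = 0)
    (hsame : ∀ (α β : Fin M) (i : Fin N),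
      P.bracket (y α i) (y β i) = ∑ γ, c α β γ • y γ i)
    (hD : ∀ (m : ℕ) (α : Fin M),
      D m α = ∑ i ∈ Finset.univ.filter (fun i : Fin N => (i : ℕ) < m), y α i)
    (m : ℕ) (α β : Fin M) :
    P.bracket (D m α) (D m β) = ∑ γ, c α β γ • D m γ := by
  rw [hD m α, hD m β]
  simp only [map_sum, LinearMap.sum_apply]
  rw [Finset.sum_comm]
  have hterm : ∀ i ∈ Finset.univ.filter (fun i : Fin N => (i : ℕ) < m),
      (∑ j ∈ Finset.univ.filter (fun j : Fin N => (j : ℕ) < m), P.bracket (y α i) (y β j))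
        = ∑ γ, c α β γ • y γ i := by
    intro i hi
    rw [Finset.sum_eq_single i (fun j _ hne => hsep α β i j (Ne.symm hne))
      (fun h => absurd hi h)]
    exact hsame α β i
  rw [Finset.sum_congr rfl hterm, Finset.sum_comm]
  refine Finset.sum_congr rfl fun γ _ => ?_
  rw [hD m γ, Finset.smul_sum]

/-- Part (a) as an auxiliary lemma. -/
lemma partA
    (hsep : ∀ (α β : Fin M) (i j : Fin N), i ≠ j → P.bracket (y α i) (y β j) = 0)
    (hsame : ∀ (α β : Fin M) (i : Fin N),
      P.bracket (y α i) (y β i) = ∑ γ, c α β γ • y γ i)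
    (hD : ∀ (m : ℕ) (α : Fin M),
      D m α = ∑ i ∈ Finset.univ.filter (fun i : Fin N => (i : ℕ) < m), y α i)
    (C : MvPolynomial (Fin M) K)
    (hC : ∀ β : Fin M,
      ∑ α, MvPolynomial.pderiv α C * (∑ γ, c α β γ • MvPolynomial.X γ) = 0)
    (m n : ℕ) (hmn : m ≤ n) (β : Fin M) :
    P.bracket (MvPolynomial.aeval (D m) C) (D n β) = 0 := by
  -- bracket with y β j vanishes for m ≤ j
  have hyj : ∀ (j : Fin N), m ≤ (j : ℕ) →
      P.bracket (MvPolynomial.aeval (D m) C) (y β j) = 0 := by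
    intro j hj
    rw [P.bracket_aeval]
    refine Finset.sum_eq_zero fun α _ => ?_
    rw [bracket_D_y P y D hsep hD m α β j hj, mul_zero]
  -- bracket with D m β vanishes by the Casimir identity
  have hDm : P.bracket (MvPolynomial.aeval (D m) C) (D m β) = 0 := by
    rw [P.bracket_aeval]
    have := congrArg (MvPolynomial.aeval (D m)) (hC β)
    rw [map_sum, map_zero] at this
    rw [← this]
    refine Finset.sum_congr rfl fun α _ => ?_
    rw [map_mul, bracket_D_D P c y D hsep hsame hD m α β]
    congr 1
    rw [map_sum]
    refine Finset.sum_congr rfl fun γ _ => ?_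
    rw [map_smul, MvPolynomial.aeval_X]
  -- split D n β
  have hsplit : D n β = D m β
      + ∑ j ∈ (Finset.univ.filter (fun j : Fin N => (j : ℕ) < n)).filter
          (fun j : Fin N => ¬ (j : ℕ) < m), y β j := by
    rw [hD n β, hD m β]
    have h1 : Finset.univ.filter (fun j : Fin N => (j : ℕ) < m)
        = (Finset.univ.filter (fun j : Fin N => (j : ℕ) < n)).filter
            (fun j : Fin N => (j : ℕ) < m) := by
      rw [Finset.filter_filter]
      exact Finset.filter_congr fun j _ => by constructor <;> intro h <;> [exact ⟨by omega, h⟩; exact h.2]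
    rw [h1]
    exact (Finset.sum_filter_add_sum_filter_not _ _ _).symm
  rw [hsplit, map_add, map_sum]
  rw [hDm, zero_add]
  refine Finset.sum_eq_zero fun j hj => ?_
  simp only [Finset.mem_filter] at hj
  exact hyj j (by omega)

end Main

/-- the involutive family produced by the coproduct method:
(a) `{Δ^(m)(C), Δ^(n)(β)} = 0` for `m ≤ n`, and
(b) `{Δ^(m)(C), Δ^(n)(C')} = 0` for all `m, n`. -/
theorem coproduct_method_involutive_family
    {K B : Type*} [Field K] [CharZero K] [CommRing B] [Algebra K B]
    (P : PoissonStructure K B) {M N : ℕ} (hM : 0 < M) (hN : 0 < N)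
    (c : Fin M → Fin M → Fin M → K)
    (y : Fin M → Fin N → B)
    (hsep : ∀ (α β : Fin M) (i j : Fin N), i ≠ j → P.bracket (y α i) (y β j) = 0)
    (hsame : ∀ (α β : Fin M) (i : Fin N),
      P.bracket (y α i) (y β i) = ∑ γ, c α β γ • y γ i)
    (D : ℕ → Fin M → B)
    (hD : ∀ (m : ℕ) (α : Fin M),
      D m α = ∑ i ∈ Finset.univ.filter (fun i : Fin N => (i : ℕ) < m), y α i)
    (C C' : MvPolynomial (Fin M) K)
    (hC : ∀ β : Fin M,
      ∑ α, MvPolynomial.pderiv α C * (∑ γ, c α β γ • MvPolynomial.X γ) = 0)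
    (hC' : ∀ β : Fin M,
      ∑ α, MvPolynomial.pderiv α C' * (∑ γ, c α β γ • MvPolynomial.X γ) = 0) :
    (∀ (m n : ℕ), 1 ≤ m → m ≤ n → n ≤ N → ∀ β : Fin M,
        P.bracket (MvPolynomial.aeval (D m) C) (D n β) = 0) ∧
    (∀ (m n : ℕ), 1 ≤ m → m ≤ N → 1 ≤ n → n ≤ N →
        P.bracket (MvPolynomial.aeval (D m) C) (MvPolynomial.aeval (D n) C') = 0) := by
  have hb : ∀ (Q Q' : MvPolynomial (Fin M) K),
      (∀ β : Fin M,
        ∑ α, MvPolynomial.pderiv α Q * (∑ γ, c α β γ • MvPolynomial.X γ) = 0) →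
      ∀ m n : ℕ, m ≤ n →
        P.bracket (MvPolynomial.aeval (D n) Q') (MvPolynomial.aeval (D m) Q) = 0 := by
    intro Q Q' hQ m n hmn
    rw [P.bracket_aeval]
    refine Finset.sum_eq_zero fun β _ => ?_
    rw [P.antisymm, partA P c y D hsep hsame hD Q hQ m n hmn β, neg_zero, mul_zero]
  constructor
  · intro m n _ hmn _ β
    exact partA P c y D hsep hsame hD C hC m n hmn β
  · intro m n _ _ _ _
    rcases le_total m n with h | h
    · rw [P.antisymm, hb C C' hC m n h, neg_zero]
    · exact hb C' C hC' n m h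
end

section
/- Under the Lie–Poisson realization hypotheses, let b : Fin N → Fin k be a surjective block map, η : Fin N → K injective, δ : Fin k → K injective, and cst : Fin M → K constants. For l ∈ Fin k and λ ∈ K with λ ≠ η j for all j, define D_l,λ(α) := Σ_{j : b j = l} (λ − η j)⁻¹ • (y α j); for μ ∈ K with μ ≠ δ l for all l, define D'_μ(α) := Σ_{j} (μ − δ (b j))⁻¹ • (y α j) + algebraMap K B (cst α). Then: (i) for l ≠ l' and all α, β: {D_l,λ(α), D_{l'},μ(β)} = 0; (ii) for all l, α, β: {D_l,λ(α), D'_μ(β)} = (μ − δ l)⁻¹ • Σ_γ (c α β γ) • D_l,λ(γ); (iii) for λ ≠ μ (both avoiding all δ l) and all α, β: {D'_λ(α), D'_μ(β)} = (μ − λ)⁻¹ • Σ_γ (c α β γ) • (D'_λ(γ) − D'_μ(γ)). -/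
open scoped BigOperators

/-- Poisson-bracket relations of the loop coproducts associated with the
rational Gaudin model with degenerate parameters, with block map `b`. -/
theorem degenerate_gaudin_loop_coproduct_relations
    {K B : Type*} [Field K] [CharZero K] [CommRing B] [Algebra K B]
    (P : PoissonStructure K B) {M N : ℕ} (hM : 0 < M) (hN : 0 < N)
    (c : Fin M → Fin M → Fin M → K)
    (y : Fin M → Fin N → B)
    (hsep : ∀ (α β : Fin M) (i j : Fin N), i ≠ j → P.bracket (y α i) (y β j) = 0)
    (hsame : ∀ (α β : Fin M) (i : Fin N),
      P.bracket (y α i) (y β i) = ∑ γ, c α β γ • y γ i)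
    {k : ℕ} (b : Fin N → Fin k) (hb : Function.Surjective b)
    (η : Fin N → K) (hη : Function.Injective η)
    (δ : Fin k → K) (hδ : Function.Injective δ)
    (cst : Fin M → K)
    (D : Fin k → K → Fin M → B)
    (hD : ∀ (l : Fin k) (lam : K) (α : Fin M),
      D l lam α = ∑ j ∈ Finset.univ.filter (fun j : Fin N => b j = l),
        (lam - η j)⁻¹ • y α j)
    (D' : K → Fin M → B)
    (hD' : ∀ (mu : K) (α : Fin M),
      D' mu α = (∑ j, (mu - δ (b j))⁻¹ • y α j) + algebraMap K B (cst α)) :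
    -- (i) different blocks commute
    (∀ (l l' : Fin k), l ≠ l' → ∀ (lam mu : K),
        (∀ j, lam ≠ η j) → (∀ j, mu ≠ η j) → ∀ (α β : Fin M),
        P.bracket (D l lam α) (D l' mu β) = 0) ∧
    -- (ii) block coproducts against the full Gaudin coproduct
    (∀ (l : Fin k) (lam mu : K),
        (∀ j, lam ≠ η j) → (∀ l', mu ≠ δ l') → ∀ (α β : Fin M),
        P.bracket (D l lam α) (D' mu β) =
          (mu - δ l)⁻¹ • ∑ γ, c α β γ • D l lam γ) ∧
    -- (iii) the full coproduct satisfies the rational Gaudin algebra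
    (∀ (lam mu : K), lam ≠ mu →
        (∀ l, lam ≠ δ l) → (∀ l, mu ≠ δ l) → ∀ (α β : Fin M),
        P.bracket (D' lam α) (D' mu β) =
          (mu - lam)⁻¹ • ∑ γ, c α β γ • (D' lam γ - D' mu γ)) := by
  classical
  have hone : ∀ a : B, P.bracket a (1 : B) = 0 := by
    intro a
    have h := P.leibniz a 1 1
    simp only [mul_one, one_mul] at h
    exact left_eq_add.mp h
  have halg : ∀ (a : B) (r : K), P.bracket a (algebraMap K B r) = 0 := by
    intro a r
    rw [Algebra.algebraMap_eq_smul_one, map_smul, hone, smul_zero]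
  have halg' : ∀ (a : B) (r : K), P.bracket (algebraMap K B r) a = 0 := by
    intro a r
    rw [P.antisymm, halg, neg_zero]
  have hkey : ∀ (α β : Fin M) (s t : Finset (Fin N)) (f g : Fin N → K),
      P.bracket (∑ i ∈ s, f i • y α i) (∑ j ∈ t, g j • y β j)
        = ∑ i ∈ s ∩ t, (f i * g i) • ∑ γ, c α β γ • y γ i := by
    intro α β s t f g
    rw [map_sum]
    simp only [LinearMap.coe_sum, Finset.sum_apply, map_smul, LinearMap.smul_apply,
      map_sum, Finset.smul_sum]
    rw [Finset.sum_comm]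
    have hterm : ∀ i ∈ s, (∑ j ∈ t, g j • f i • P.bracket (y α i) (y β j))
        = if i ∈ t then (f i * g i) • ∑ γ, c α β γ • y γ i else 0 := by
      intro i _
      rw [← Finset.sum_ite_eq' t i (fun j => (f i * g i) • ∑ γ, c α β γ • y γ i)]
      refine Finset.sum_congr rfl fun j hj => ?_
      by_cases hij : j = i
      · subst hij
        simp [hsame, smul_smul, mul_comm]
      · simp [hij, hsep α β i j (fun h => hij h.symm)]
    rw [Finset.sum_congr rfl hterm, Finset.sum_ite_mem]
    simp [Finset.smul_sum]
  refine ⟨?_, ?_, ?_⟩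
  · -- (i)
    intro l l' hll' lam mu _ _ α β
    rw [hD, hD, hkey]
    have : (Finset.univ.filter (fun j : Fin N => b j = l)) ∩
        (Finset.univ.filter (fun j : Fin N => b j = l')) = ∅ := by
      ext j
      simp only [Finset.mem_inter, Finset.mem_filter, Finset.mem_univ, true_and,
        Finset.notMem_empty, iff_false]
      rintro ⟨h1, h2⟩
      exact hll' (h1 ▸ h2)
    rw [this, Finset.sum_empty]
  · -- (ii)
    intro l lam mu hlam hmu α β
    rw [hD, hD', map_add, halg, add_zero, hkey, Finset.inter_univ]
    simp only [hD, Finset.smul_sum, smul_smul]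
    rw [Finset.sum_comm]
    refine Finset.sum_congr rfl fun γ _ => Finset.sum_congr rfl fun i hi => ?_
    have hbi : b i = l := (Finset.mem_filter.mp hi).2
    rw [hbi]
    match_scalars
    ring
  · -- (iii)
    intro lam mu hlm hlam hmu α β
    rw [hD' lam α, hD' mu β, map_add, halg, add_zero, map_add,
      LinearMap.add_apply, halg', add_zero, hkey, Finset.inter_univ]
    have hsub : ∀ γ : Fin M, D' lam γ - D' mu γ
        = ∑ j, ((lam - δ (b j))⁻¹ - (mu - δ (b j))⁻¹) • y γ j := by
      intro γ
      rw [hD' lam γ, hD' mu γ, add_sub_add_right_eq_sub, ← Finset.sum_sub_distrib]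
      exact Finset.sum_congr rfl fun j _ => (sub_smul _ _ _).symm
    simp only [hsub, Finset.smul_sum, smul_smul]
    rw [Finset.sum_comm]
    refine Finset.sum_congr rfl fun γ _ => Finset.sum_congr rfl fun i _ => ?_
    have h1 : lam - δ (b i) ≠ 0 := sub_ne_zero.mpr (hlam (b i))
    have h2 : mu - δ (b i) ≠ 0 := sub_ne_zero.mpr (hmu (b i))
    have h3 : mu - lam ≠ 0 := sub_ne_zero.mpr (fun h => hlm h.symm)
    match_scalars <;> (field_simp; try ring)
end

section
/- Under the Lie–Poisson realization hypotheses, fix ε ∈ K and for 2 ≤ i ≤ N and λ ∈ K with λ ≠ 0 and λ ≠ ε define the loop coproducts Δ^(i)_λ(α) := λ⁻¹ • (Σ_{j=1}^{i−1} y α j) + (λ − ε)⁻¹ • (y α i). Then for all 2 ≤ i < k ≤ N, all admissible λ, μ and all α, β ∈ Fin M: {Δ^(i)_λ(α), Δ^(k)_μ(β)} = μ⁻¹ • Σ_γ (c α β γ) • Δ^(i)_λ(γ). -/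
open scoped BigOperators

/-- the loop coproducts
`Δ^(i)_λ(α) = λ⁻¹ • Σ_{j=1}^{i-1} y α j + (λ - ε)⁻¹ • y α i` satisfy relation (p1):
`{Δ^(i)_λ(α), Δ^(k)_μ(β)} = μ⁻¹ • Σ_γ c α β γ • Δ^(i)_λ(γ)` for `i < k`. -/
theorem loop_coproducts_p1
    {K B : Type*} [Field K] [CharZero K] [CommRing B] [Algebra K B]
    (P : PoissonStructure K B) {M N : ℕ} (hM : 0 < M) (hN : 0 < N)
    (c : Fin M → Fin M → Fin M → K)
    (y : Fin M → Fin N → B)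
    (hsep : ∀ (α β : Fin M) (i j : Fin N), i ≠ j → P.bracket (y α i) (y β j) = 0)
    (hsame : ∀ (α β : Fin M) (i : Fin N),
      P.bracket (y α i) (y β i) = ∑ γ, c α β γ • y γ i)
    (ε : K)
    (D : ℕ → K → Fin M → B)
    (hD : ∀ (i : ℕ) (hi2 : 2 ≤ i) (hiN : i ≤ N) (lam : K) (α : Fin M),
      D i lam α =
        lam⁻¹ • (∑ j ∈ Finset.univ.filter (fun j : Fin N => (j : ℕ) + 1 < i), y α j)
          + (lam - ε)⁻¹ • y α ⟨i - 1, by omega⟩) :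
    ∀ (i k : ℕ), 2 ≤ i → i < k → k ≤ N →
      ∀ (lam mu : K), lam ≠ 0 → lam ≠ ε → mu ≠ 0 → mu ≠ ε →
      ∀ (α β : Fin M),
        P.bracket (D i lam α) (D k mu β) = mu⁻¹ • ∑ γ, c α β γ • D i lam γ := by
  intro i k hi2 hik hkN lam mu hlam hlame hmu hmue α β
  have hk2 : 2 ≤ k := by omega
  -- key lemma: bracket of a single y α a (a+1 < k) with D k mu β
  have key : ∀ a : Fin N, (a : ℕ) + 1 < k →
      P.bracket (y α a) (D k mu β) = mu⁻¹ • ∑ γ, c α β γ • y γ a := by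
    intro a ha
    rw [hD k hk2 hkN mu β, map_add, map_smul, map_smul]
    have h1 : P.bracket (y α a) (y β ⟨k - 1, by omega⟩) = 0 := by
      apply hsep
      intro h
      have := congrArg Fin.val h
      simp at this
      omega
    rw [h1, smul_zero, add_zero, map_sum]
    rw [Finset.sum_eq_single a]
    · rw [hsame]
    · intro b hb hba
      exact hsep α β a b (Ne.symm hba)
    · intro hnot
      exfalso
      apply hnot
      simp [ha]
  rw [hD i hi2 (by omega) lam α]
  simp only [map_add, map_smul, map_sum, LinearMap.add_apply, LinearMap.smul_apply,
    LinearMap.sum_apply]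
  have hsum : ∀ j ∈ Finset.univ.filter (fun j : Fin N => (j : ℕ) + 1 < i),
      P.bracket (y α j) (D k mu β) = mu⁻¹ • ∑ γ, c α β γ • y γ j := by
    intro j hj
    simp only [Finset.mem_filter] at hj
    exact key j (by omega)
  rw [Finset.sum_congr rfl hsum, key ⟨i - 1, by omega⟩ (by simp; omega)]
  -- now both sides are explicit sums
  conv_rhs => rw [show (∑ γ, c α β γ • D i lam γ) =
    ∑ γ, c α β γ • (lam⁻¹ • (∑ j ∈ Finset.univ.filter (fun j : Fin N => (j : ℕ) + 1 < i), y γ j)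
          + (lam - ε)⁻¹ • y γ ⟨i - 1, by omega⟩) from
    Finset.sum_congr rfl fun γ _ => by rw [hD i hi2 (by omega) lam γ]]
  simp only [smul_add, Finset.smul_sum, Finset.sum_add_distrib, smul_smul]
  congr 1
  · rw [Finset.sum_comm]
    exact Finset.sum_congr rfl fun γ _ => Finset.sum_congr rfl fun j _ => by
      congr 1; ring
  · exact Finset.sum_congr rfl fun γ _ => by congr 1; ring
end

section
/- Under the Lie–Poisson realization hypotheses, fix ε ∈ K and for 2 ≤ i ≤ N and λ ∈ K with λ ≠ 0 and λ ≠ ε define the loop coproducts Δ^(i)_λ(α) := λ⁻¹ • (Σ_{j=1}^{i−1} y α j) + (λ − ε)⁻¹ • (y α i). Then for any two formal Casimirs C, C' for c and any 2 ≤ i, k ≤ N and admissible λ, μ with (i, λ) ≠ (k, μ): {(aeval Δ^(i)_λ) C, (aeval Δ^(k)_μ) C'} = 0. -/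
open scoped BigOperators

/-!
Write both loop coproducts as combinations `Δ = ∑ j, a j • y · j` and `Δ' = ∑ j, b j • y · j`
of the site generators. Distinct sites Poisson-commute, so by the chain rule
`{C(Δ), C'(Δ')} = ∑ j, a j b j E j`, where `E j` contracts the structure constants against the
gradients of `C` at `Δ` and of `C'` at `Δ'` and evaluates the result at site `j`. The Casimir
property of `C` gives `∑ j, a j E j = 0`; that of `C'`, combined with the antisymmetry of the
bracket at each site, gives `∑ j, b j E j = 0`. Finally the loop coefficients satisfy a
partial-fraction identity `a j b j = p a j + q b j` with `p, q` independent of `j`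
(for `i = k` it is `1 / (λ μ) = (μ - λ)⁻¹ (1 / λ - 1 / μ)`, and likewise with `λ - ε, μ - ε`).
-/

open MvPolynomial Finset

theorem Derivation.map_mvPolynomial_aeval {K B σ : Type*} [CommRing K] [CommRing B]
    [Algebra K B] [Fintype σ] (D : Derivation K B B) (x : σ → B) (f : MvPolynomial σ K) :
    D (aeval x f) = ∑ α, aeval x (pderiv α f) * D (x α) := by
  induction f using MvPolynomial.induction_on with
  | C a => simp
  | add f g hf hg => simp [hf, hg, add_mul, sum_add_distrib]
  | mul_X f α hf =>
    classical
    rw [map_mul, aeval_X, Derivation.leibniz, hf]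
    simp only [Derivation.leibniz, pderiv_X, smul_eq_mul, map_add, map_mul, aeval_X, add_mul,
      sum_add_distrib]
    simp [Pi.single_apply, mul_sum, mul_assoc]

namespace PoissonStructure

variable {K B : Type*} [CommRing K] [CommRing B] [Algebra K B] (P : PoissonStructure K B)

def hamiltonian (a : B) : Derivation K B B :=
  Derivation.mk' (P.bracket a) fun b c => by
    rw [P.leibniz, smul_eq_mul, smul_eq_mul]; ring

lemma bracket_aeval_right {σ : Type*} [Fintype σ] (a : B) (z : σ → B) (g : MvPolynomial σ K) :
    P.bracket a (aeval z g) = ∑ β, aeval z (pderiv β g) * P.bracket a (z β) :=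
  (P.hamiltonian a).map_mvPolynomial_aeval z g

lemma bracket_aeval_left {σ : Type*} [Fintype σ] (x : σ → B) (f : MvPolynomial σ K) (b : B) :
    P.bracket (aeval x f) b = ∑ α, aeval x (pderiv α f) * P.bracket (x α) b := by
  simp only [P.antisymm _ b, bracket_aeval_right, mul_neg, sum_neg_distrib]

lemma bracket_aeval_aeval {σ : Type*} [Fintype σ] (x z : σ → B) (f g : MvPolynomial σ K) :
    P.bracket (aeval x f) (aeval z g) =
      ∑ α, ∑ β, aeval x (pderiv α f) * aeval z (pderiv β g) * P.bracket (x α) (z β) := by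
  rw [bracket_aeval_left]
  simp only [bracket_aeval_right, mul_sum, mul_assoc]

end PoissonStructure

section LiePoisson

variable {K B σ ι : Type*} [CommRing K] [CommRing B] [Algebra K B] [Fintype ι]

def siteSum (y : σ → ι → B) (a : ι → K) : σ → B := fun α => ∑ j, a j • y α j

lemma bracket_siteSum {P : PoissonStructure K B} {y : σ → ι → B}
    (hsep : ∀ α β i j, i ≠ j → P.bracket (y α i) (y β j) = 0) (a b : ι → K) (α β : σ) :
    P.bracket (siteSum y a α) (siteSum y b β) = ∑ j, (a j * b j) • P.bracket (y α j) (y β j) := by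
  simp only [siteSum, map_sum, map_smul, LinearMap.sum_apply, LinearMap.smul_apply]
  refine sum_congr rfl fun j _ => ?_
  rw [sum_eq_single j (fun k _ hk => by rw [hsep α β k j hk, smul_zero]) (by simp),
    smul_smul, mul_comm]

variable [Fintype σ]

lemma sum_smul_siteSum (y : σ → ι → B) (a : ι → K) (t : σ → K) :
    ∑ γ, t γ • siteSum y a γ = ∑ j, a j • ∑ γ, t γ • y γ j := by
  simp only [siteSum, smul_sum, smul_comm (t _) (a _)]
  exact sum_comm

def structurePairing (c : σ → σ → σ → K) (u v z : σ → B) : B :=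
  ∑ α, ∑ β, u α * v β * ∑ γ, c α β γ • z γ

lemma structurePairing_siteSum (c : σ → σ → σ → K) (u v : σ → B) (y : σ → ι → B) (a : ι → K) :
    structurePairing c u v (siteSum y a) =
      ∑ j, a j • structurePairing c u v (fun γ => y γ j) := by
  simp only [structurePairing, sum_smul_siteSum, mul_sum, smul_sum, mul_smul_comm]
  conv_lhs => enter [2, α]; rw [sum_comm]
  exact sum_comm

lemma sum_smul_siteSum_swap {P : PoissonStructure K B} {c : σ → σ → σ → K} {y : σ → ι → B}
    (hsame : ∀ α β i, P.bracket (y α i) (y β i) = ∑ γ, c α β γ • y γ i) (a : ι → K) (α β : σ) :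
    ∑ γ, c α β γ • siteSum y a γ = -∑ γ, c β α γ • siteSum y a γ := by
  simp only [sum_smul_siteSum, ← hsame, P.antisymm (y α _), smul_neg, sum_neg_distrib]

lemma bracket_aeval_siteSum {P : PoissonStructure K B} {c : σ → σ → σ → K} {y : σ → ι → B}
    (hsep : ∀ α β i j, i ≠ j → P.bracket (y α i) (y β j) = 0)
    (hsame : ∀ α β i, P.bracket (y α i) (y β i) = ∑ γ, c α β γ • y γ i)
    (a b : ι → K) (f g : MvPolynomial σ K) :
    P.bracket (aeval (siteSum y a) f) (aeval (siteSum y b) g) =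
      ∑ j, (a j * b j) • structurePairing c (fun α => aeval (siteSum y a) (pderiv α f))
        (fun β => aeval (siteSum y b) (pderiv β g)) (fun γ => y γ j) := by
  simp only [P.bracket_aeval_aeval, bracket_siteSum hsep, hsame, structurePairing, mul_sum,
    smul_sum, mul_smul_comm]
  conv_lhs => enter [2, α]; rw [sum_comm]
  exact sum_comm

def IsFormalCasimir (c : σ → σ → σ → K) (C : MvPolynomial σ K) : Prop :=
  ∀ β, ∑ α, pderiv α C * ∑ γ, c α β γ • X γ = 0

namespace IsFormalCasimir

variable {c : σ → σ → σ → K} {C : MvPolynomial σ K}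

lemma aeval_eq_zero (hC : IsFormalCasimir c C) (x : σ → B) (β : σ) :
    ∑ α, aeval x (pderiv α C) * ∑ γ, c α β γ • x γ = 0 := by
  simpa using congrArg (aeval x) (hC β)

lemma structurePairing_left_eq_zero (hC : IsFormalCasimir c C) (x v : σ → B) :
    structurePairing c (fun α => aeval x (pderiv α C)) v x = 0 := by
  rw [structurePairing, sum_comm]
  simp only [mul_comm (aeval x _) (v _), mul_assoc, ← mul_sum, hC.aeval_eq_zero, mul_zero,
    sum_const_zero]

lemma structurePairing_right_eq_zero (hC : IsFormalCasimir c C) {z : σ → B}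
    (hz : ∀ α β, ∑ γ, c α β γ • z γ = -∑ γ, c β α γ • z γ) (u : σ → B) :
    structurePairing c u (fun β => aeval z (pderiv β C)) z = 0 :=
  sum_eq_zero fun α _ => by
    simp only [hz α, mul_assoc, mul_neg, sum_neg_distrib, ← mul_sum, hC.aeval_eq_zero z α,
      neg_zero, mul_zero]

end IsFormalCasimir

end LiePoisson

section LoopCoproduct

variable {K : Type*} [Field K]

/-- The coefficient of the site `j` (counted from `1`) in the loop coproduct `Δ^(i)_λ`. -/
def loopCoeff (ε : K) (i : ℕ) (lam : K) (j : ℕ) : K :=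
  if j < i then lam⁻¹ else if j = i then (lam - ε)⁻¹ else 0

lemma loopCoeff_mul_of_lt (ε : K) {i k : ℕ} (hik : i < k) (lam mu : K) (j : ℕ) :
    loopCoeff ε i lam j * loopCoeff ε k mu j = mu⁻¹ * loopCoeff ε i lam j := by
  unfold loopCoeff
  split_ifs <;> first | omega | ring

lemma loopCoeff_mul_loopCoeff_of_ne {ε lam mu : K} (hlam0 : lam ≠ 0) (hlame : lam ≠ ε)
    (hmu0 : mu ≠ 0) (hmue : mu ≠ ε) (hne : lam ≠ mu) (i j : ℕ) :
    loopCoeff ε i lam j * loopCoeff ε i mu j =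
      (mu - lam)⁻¹ * (loopCoeff ε i lam j - loopCoeff ε i mu j) := by
  have hml : mu - lam ≠ 0 := sub_ne_zero.mpr hne.symm
  have hle : lam - ε ≠ 0 := sub_ne_zero.mpr hlame
  have hme : mu - ε ≠ 0 := sub_ne_zero.mpr hmue
  unfold loopCoeff
  split_ifs <;> field_simp <;> ring

lemma exists_loopCoeff_mul_eq {ε lam mu : K} (hlam0 : lam ≠ 0) (hlame : lam ≠ ε)
    (hmu0 : mu ≠ 0) (hmue : mu ≠ ε) {i k : ℕ} (hne : i ≠ k ∨ lam ≠ mu) :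
    ∃ p q : K, ∀ j, loopCoeff ε i lam j * loopCoeff ε k mu j =
      p * loopCoeff ε i lam j + q * loopCoeff ε k mu j := by
  rcases lt_trichotomy i k with hik | rfl | hki
  · exact ⟨mu⁻¹, 0, fun j => by rw [loopCoeff_mul_of_lt ε hik, zero_mul, add_zero]⟩
  · refine ⟨(mu - lam)⁻¹, -(mu - lam)⁻¹, fun j => ?_⟩
    rw [loopCoeff_mul_loopCoeff_of_ne hlam0 hlame hmu0 hmue (hne.resolve_left fun h => h rfl)]
    ring
  · exact ⟨0, lam⁻¹, fun j => by rw [mul_comm, loopCoeff_mul_of_lt ε hki, zero_mul, zero_add]⟩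

lemma siteSum_loopCoeff {B σ : Type*} [CommRing B] [Algebra K B] {N : ℕ} (y : σ → Fin N → B)
    (ε : K) {i : ℕ} (hi : 0 < i) (hiN : i ≤ N) (lam : K) (α : σ) :
    siteSum y (fun j => loopCoeff ε i lam (j + 1)) α =
      lam⁻¹ • (∑ j ∈ univ.filter (fun j : Fin N => (j : ℕ) + 1 < i), y α j)
        + (lam - ε)⁻¹ • y α ⟨i - 1, by omega⟩ := by
  simp only [siteSum, loopCoeff, ite_smul, zero_smul]
  rw [sum_ite, ← smul_sum]
  congr 1
  rw [sum_eq_single_of_mem ⟨i - 1, by omega⟩ (by simp only [mem_filter, mem_univ, true_and]; omega) fun j _ hj => ?_]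
  · rw [if_pos (Nat.sub_add_cancel hi)]
  · rw [if_neg fun h => hj (Fin.ext (Nat.eq_sub_of_add_eq h))]

end LoopCoproduct

lemma sum_mul_smul_eq_zero {K V ι : Type*} [Semiring K] [AddCommMonoid V] [Module K V]
    [Fintype ι] {a b : ι → K} {e : ι → V} {p q : K} (hab : ∀ j, a j * b j = p * a j + q * b j)
    (ha : ∑ j, a j • e j = 0) (hb : ∑ j, b j • e j = 0) : ∑ j, (a j * b j) • e j = 0 := by
  simp only [hab, add_smul, mul_smul, sum_add_distrib, ← smul_sum, ha, hb, smul_zero, add_zero]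

/-- the images of two formal Casimirs under the loop coproducts
`Δ^(i)_λ` and `Δ^(k)_μ` are in involution whenever `(i, λ) ≠ (k, μ)`. -/
theorem loop_coproducts_casimirs_involutive
    {K B : Type*} [Field K] [CommRing B] [Algebra K B]
    (P : PoissonStructure K B) {M N : ℕ}
    (c : Fin M → Fin M → Fin M → K)
    (y : Fin M → Fin N → B)
    (hsep : ∀ (α β : Fin M) (i j : Fin N), i ≠ j → P.bracket (y α i) (y β j) = 0)
    (hsame : ∀ (α β : Fin M) (i : Fin N),
      P.bracket (y α i) (y β i) = ∑ γ, c α β γ • y γ i)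
    (ε : K)
    (D : ℕ → K → Fin M → B)
    (hD : ∀ (i : ℕ) (hi2 : 2 ≤ i) (hiN : i ≤ N) (lam : K) (α : Fin M),
      D i lam α =
        lam⁻¹ • (∑ j ∈ Finset.univ.filter (fun j : Fin N => (j : ℕ) + 1 < i), y α j)
          + (lam - ε)⁻¹ • y α ⟨i - 1, by omega⟩)
    (C C' : MvPolynomial (Fin M) K)
    (hC : ∀ β : Fin M,
      ∑ α, MvPolynomial.pderiv α C * (∑ γ, c α β γ • MvPolynomial.X γ) = 0)
    (hC' : ∀ β : Fin M,
      ∑ α, MvPolynomial.pderiv α C' * (∑ γ, c α β γ • MvPolynomial.X γ) = 0) :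
    ∀ (i k : ℕ), 2 ≤ i → i ≤ N → 2 ≤ k → k ≤ N →
      ∀ (lam mu : K), lam ≠ 0 → lam ≠ ε → mu ≠ 0 → mu ≠ ε →
      (i ≠ k ∨ lam ≠ mu) →
      P.bracket (MvPolynomial.aeval (D i lam) C)
        (MvPolynomial.aeval (D k mu) C') = 0 := by
  intro i k hi2 hiN hk2 hkN lam mu hlam0 hlame hmu0 hmue hne
  have hDi : D i lam = siteSum y fun j => loopCoeff ε i lam (j + 1) :=
    funext fun α => (hD i hi2 hiN lam α).trans (siteSum_loopCoeff y ε (by omega) hiN lam α).symm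
  have hDk : D k mu = siteSum y fun j => loopCoeff ε k mu (j + 1) :=
    funext fun α => (hD k hk2 hkN mu α).trans (siteSum_loopCoeff y ε (by omega) hkN mu α).symm
  obtain ⟨p, q, hpq⟩ := exists_loopCoeff_mul_eq hlam0 hlame hmu0 hmue hne
  rw [hDi, hDk, bracket_aeval_siteSum hsep hsame]
  refine sum_mul_smul_eq_zero (fun j => hpq (j + 1)) ?_ ?_
  · rw [← structurePairing_siteSum, IsFormalCasimir.structurePairing_left_eq_zero hC]
  · rw [← structurePairing_siteSum,
      IsFormalCasimir.structurePairing_right_eq_zero hC' (sum_smul_siteSum_swap hsame _)]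
end

section
/- Let K be a field of characteristic zero, B a Poisson algebra over K, n, M, N positive integers, and X : Fin M → Matrix (Fin n) (Fin n) K matrices with [X α, X β] = Σ_γ (c α β γ) • X γ for completely antisymmetric structure constants c (c α β γ = −c β α γ and c α β γ = −c α γ β). Let y : Fin M → Fin N → B satisfy {y α i, y β j} = 0 for i ≠ j and {y α i, y β i} = Σ_γ (c α β γ) • (y γ i). Let ε : Fin N → K, let s, t : Fin M → K, set σ := Σ_α (s α) • X α and τ := Σ_α (t α) • X α, and assume σ * τ = τ * σ. For λ ∈ K with λ ≠ ε i for all i, let L λ := Σ_{α, i} ((λ − ε i)⁻¹ • y α i) • X α + σ, an n×n matrix with entries in B (scalars mapped via the algebra map), and let F_τ := Σ_{α, i} (t α) • (y α i). Then for every natural number m: {F_τ, trace ((L λ)^m)} = 0, i.e. F_τ Poisson-commutes with all spectral invariants of the rational Gaudin Lax matrix. -/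
open scoped BigOperators

section Aux
variable {K B : Type*} [CommRing K] [CommRing B] [Algebra K B] {n : ℕ}

lemma aux_map_mul (D : B →ₗ[K] B)
    (hD : ∀ a b : B, D (a * b) = D a * b + a * D b)
    (P Q : Matrix (Fin n) (Fin n) B) :
    (P * Q).map ⇑D = P.map ⇑D * Q + P * Q.map ⇑D := by
  ext p q
  simp only [Matrix.map_apply, Matrix.mul_apply, Matrix.add_apply, map_sum, hD,
    Finset.sum_add_distrib]

lemma aux_map_pow (D : B →ₗ[K] B)
    (hD : ∀ a b : B, D (a * b) = D a * b + a * D b)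
    (hone : D 1 = 0)
    (L T : Matrix (Fin n) (Fin n) B) (hLT : L.map ⇑D = L * T - T * L) :
    ∀ m : ℕ, (L ^ m).map ⇑D = L ^ m * T - T * L ^ m := by
  intro m
  induction m with
  | zero =>
    ext p q
    simp [Matrix.map_apply, Matrix.one_apply, apply_ite ⇑D, hone]
  | succ m ih =>
    rw [pow_succ, aux_map_mul D hD, ih, hLT]
    noncomm_ring

end Aux

/-- the commutant function `F_τ = Σ_{α,i} t α • y α i` Poisson-commutes
with all spectral invariants `trace (L λ ^ m)` of the rational Gaudin Lax matrix
`L λ = Σ_{α,i} ((λ - ε i)⁻¹ • y α i) • X α + σ`, provided `σ τ = τ σ`. -/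
theorem commutant_function_commutes_with_spectral_invariants
    {K B : Type*} [Field K] [CharZero K] [CommRing B] [Algebra K B]
    (P : PoissonStructure K B) {n M N : ℕ} (hn : 0 < n) (hM : 0 < M) (hN : 0 < N)
    (X : Fin M → Matrix (Fin n) (Fin n) K)
    (c : Fin M → Fin M → Fin M → K)
    (hcomm : ∀ α β, X α * X β - X β * X α = ∑ γ, c α β γ • X γ)
    (hc1 : ∀ α β γ, c α β γ = - c β α γ)
    (hc2 : ∀ α β γ, c α β γ = - c α γ β)
    (y : Fin M → Fin N → B)
    (hsep : ∀ (α β : Fin M) (i j : Fin N), i ≠ j → P.bracket (y α i) (y β j) = 0)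
    (hsame : ∀ (α β : Fin M) (i : Fin N),
      P.bracket (y α i) (y β i) = ∑ γ, c α β γ • y γ i)
    (ε : Fin N → K) (s t : Fin M → K)
    (σ τ : Matrix (Fin n) (Fin n) K)
    (hσ : σ = ∑ α, s α • X α) (hτ : τ = ∑ α, t α • X α)
    (hστ : σ * τ = τ * σ)
    (L : K → Matrix (Fin n) (Fin n) B)
    (hL : ∀ lam : K,
      L lam = (∑ α, ∑ i, ((lam - ε i)⁻¹ • y α i) • (X α).map (algebraMap K B))
        + σ.map (algebraMap K B))
    (Fτ : B) (hFτ : Fτ = ∑ α, ∑ i, t α • y α i) :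
    ∀ (lam : K), (∀ i, lam ≠ ε i) → ∀ (m : ℕ),
      P.bracket Fτ (Matrix.trace (L lam ^ m)) = 0 := by
  intro lam _hlam m
  set D : B →ₗ[K] B := P.bracket Fτ with hDdef
  have hleib : ∀ a b : B, D (a * b) = D a * b + a * D b := fun a b => P.leibniz Fτ a b
  have hone : D 1 = 0 := by
    have h := hleib 1 1
    simpa using h
  have halg : ∀ k : K, D (algebraMap K B k) = 0 := by
    intro k
    rw [Algebra.algebraMap_eq_smul_one, map_smul, hone, smul_zero]
  set T : Matrix (Fin n) (Fin n) B := τ.map ⇑(algebraMap K B) with hTdef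
  -- D on the generators
  have hDy : ∀ α i, D (y α i) = ∑ α', ∑ γ, (t α' * c α' α γ) • y γ i := by
    intro α i
    rw [hDdef, hFτ]
    simp only [map_sum, map_smul, LinearMap.sum_apply, LinearMap.smul_apply]
    refine Finset.sum_congr rfl fun α' _ => ?_
    rw [Finset.sum_eq_single i]
    · rw [hsame, Finset.smul_sum]
      exact Finset.sum_congr rfl fun γ _ => smul_smul _ _ _
    · intro i' _ hne
      rw [hsep α' α i' i hne, smul_zero]
    · intro h; exact absurd (Finset.mem_univ i) h
  -- step 1 : map of L
  have step1 : (L lam).map ⇑D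
      = ∑ α, ∑ i, (((lam - ε i)⁻¹ • D (y α i)) • (X α).map (algebraMap K B)) := by
    rw [hL lam]
    ext p q
    simp [Matrix.map_apply, Matrix.add_apply, Matrix.sum_apply, Matrix.smul_apply,
      smul_eq_mul, map_sum, hleib, halg, map_smul]
  -- T as a sum
  have hms : ∀ (k : K) (A : Matrix (Fin n) (Fin n) K),
      (k • A).map ⇑(algebraMap K B) = k • A.map ⇑(algebraMap K B) := by
    intro k A; ext p q
    simp only [Matrix.map_apply, Matrix.smul_apply, smul_eq_mul, map_mul]
    rw [Algebra.smul_def]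
  have hTsum : T = ∑ α', t α' • (X α').map ⇑(algebraMap K B) := by
    rw [hTdef, hτ]
    have h := map_sum ((algebraMap K B).mapMatrix) (fun α' => t α' • X α') Finset.univ
    simp only [RingHom.mapMatrix_apply] at h
    rw [h]
    exact Finset.sum_congr rfl fun α' _ => hms _ _
  -- commutator of mapped X's
  have hXc : ∀ α α', (X α).map ⇑(algebraMap K B) * (X α').map ⇑(algebraMap K B)
      - (X α').map ⇑(algebraMap K B) * (X α).map ⇑(algebraMap K B)
      = ∑ γ, c α α' γ • (X γ).map ⇑(algebraMap K B) := by
    intro α α'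
    have h := congrArg ((algebraMap K B).mapMatrix) (hcomm α α')
    simp only [map_sub, map_mul, map_sum, RingHom.mapMatrix_apply, hms] at h
    exact h
  -- the sigma part commutes with T
  have hστB : σ.map ⇑(algebraMap K B) * T - T * σ.map ⇑(algebraMap K B) = 0 := by
    have h := congrArg ((algebraMap K B).mapMatrix) hστ
    simp only [map_mul, RingHom.mapMatrix_apply] at h
    rw [hTdef, h, sub_self]
  have hXT : ∀ α, (X α).map ⇑(algebraMap K B) * T - T * (X α).map ⇑(algebraMap K B)
      = ∑ α', ∑ γ, (t α' * c α α' γ) • (X γ).map ⇑(algebraMap K B) := by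
    intro α
    rw [hTsum]
    rw [Finset.mul_sum, Finset.sum_mul, ← Finset.sum_sub_distrib]
    refine Finset.sum_congr rfl fun α' _ => ?_
    rw [mul_smul_comm, smul_mul_assoc, ← smul_sub, hXc α α', Finset.smul_sum]
    exact Finset.sum_congr rfl fun γ _ => smul_smul _ _ _
  have expand : L lam * T - T * L lam
      = (∑ α, ∑ i, ((lam - ε i)⁻¹ • y α i) •
          ((X α).map (algebraMap K B) * T - T * (X α).map (algebraMap K B)))
        + (σ.map ⇑(algebraMap K B) * T - T * σ.map ⇑(algebraMap K B)) := by
    rw [hL lam]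
    simp only [add_mul, mul_add, Finset.sum_mul, Finset.mul_sum, smul_mul_assoc,
      mul_smul_comm, smul_sub, Finset.sum_sub_distrib]
    abel
  have inner1 : ∀ α i, (((lam - ε i)⁻¹ • D (y α i)) • (X α).map ⇑(algebraMap K B))
      = ∑ α', ∑ γ, ((lam - ε i)⁻¹ * (t α' * c α' α γ)) •
          (y γ i • (X α).map ⇑(algebraMap K B)) := by
    intro α i
    rw [hDy, Finset.smul_sum, Finset.sum_smul]
    refine Finset.sum_congr rfl fun α' _ => ?_
    rw [Finset.smul_sum, Finset.sum_smul]
    refine Finset.sum_congr rfl fun γ _ => ?_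
    rw [smul_smul, smul_assoc]
  have lhs2 : (L lam).map ⇑D
      = ∑ i, ∑ α', ∑ α, ∑ γ, ((lam - ε i)⁻¹ * (t α' * c α' α γ)) •
          (y γ i • (X α).map ⇑(algebraMap K B)) := by
    rw [step1]
    simp only [inner1]
    rw [Finset.sum_comm]
    exact Finset.sum_congr rfl fun i _ => Finset.sum_comm
  have inner2 : ∀ α i, ((lam - ε i)⁻¹ • y α i) •
        ((X α).map (algebraMap K B) * T - T * (X α).map (algebraMap K B))
      = ∑ α', ∑ γ, ((lam - ε i)⁻¹ * (t α' * c α α' γ)) •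
          (y α i • (X γ).map ⇑(algebraMap K B)) := by
    intro α i
    rw [hXT, Finset.smul_sum]
    refine Finset.sum_congr rfl fun α' _ => ?_
    rw [Finset.smul_sum]
    refine Finset.sum_congr rfl fun γ _ => ?_
    rw [smul_comm, smul_assoc, smul_smul, mul_comm (t α' * c α α' γ)]
  have rhs2 : L lam * T - T * L lam
      = ∑ i, ∑ α', ∑ α, ∑ γ, ((lam - ε i)⁻¹ * (t α' * c α α' γ)) •
          (y α i • (X γ).map ⇑(algebraMap K B)) := by
    rw [expand, hστB, add_zero]
    simp only [inner2]
    rw [Finset.sum_comm]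
    exact Finset.sum_congr rfl fun i _ => Finset.sum_comm
  have hcc : ∀ a g b, c a g b = c b a g := by
    intro a g b
    rw [hc2, hc1, neg_neg]
  have key : (L lam).map ⇑D = L lam * T - T * L lam := by
    rw [lhs2, rhs2]
    refine Finset.sum_congr rfl fun i _ => Finset.sum_congr rfl fun α' _ => ?_
    rw [Finset.sum_comm]
    refine Finset.sum_congr rfl fun α _ => Finset.sum_congr rfl fun γ _ => ?_
    rw [hcc]
  have hpow := aux_map_pow D hleib hone (L lam) T key m
  have htr : D (Matrix.trace (L lam ^ m)) = Matrix.trace ((L lam ^ m).map ⇑D) := by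
    simp [Matrix.trace, Matrix.diag, Matrix.map_apply, map_sum]
  show D (Matrix.trace (L lam ^ m)) = 0
  rw [htr, hpow, Matrix.trace_sub, Matrix.trace_mul_comm, sub_self]
end

section
/- Let K be a field of characteristic zero and B a Poisson algebra over K containing elements N, A⁺, A⁻, B⁺, B⁻, M satisfying the two-photon algebra h₆ brackets: {N,A⁺} = A⁺, {N,A⁻} = −A⁻, {A⁻,A⁺} = M, {N,B⁺} = 2B⁺, {N,B⁻} = −2B⁻, {B⁻,B⁺} = 2M + 4N, {A⁺,B⁻} = −2A⁻, {A⁺,B⁺} = 0, {A⁻,B⁺} = 2A⁺, {A⁻,B⁻} = 0, and {M, g} = 0 for each generator g ∈ {N, A⁺, A⁻, B⁺, B⁻, M}. Define C := M·(N² − B⁺·B⁻ + M·N) − A⁺·A⁻·(M + 2N) + B⁺·(A⁻)² + (A⁺)²·B⁻. Then {C, g} = 0 for every generator g ∈ {N, A⁺, A⁻, B⁺, B⁻, M}; i.e. C is a Casimir element of the two-photon Lie–Poisson algebra h₆. -/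
open scoped BigOperators

/-- the third-order element
`C = M(N² − B⁺B⁻ + MN) − A⁺A⁻(M + 2N) + B⁺(A⁻)² + (A⁺)²B⁻` is a Casimir of the
two-photon Lie–Poisson algebra h₆. -/
theorem two_photon_casimir
    {K B : Type*} [Field K] [CharZero K] [CommRing B] [Algebra K B]
    (P : PoissonStructure K B)
    (Nel Ap Am Bp Bm Mm : B)
    (h1 : P.bracket Nel Ap = Ap)
    (h2 : P.bracket Nel Am = - Am)
    (h3 : P.bracket Am Ap = Mm)
    (h4 : P.bracket Nel Bp = 2 * Bp)
    (h5 : P.bracket Nel Bm = - (2 * Bm))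
    (h6 : P.bracket Bm Bp = 2 * Mm + 4 * Nel)
    (h7 : P.bracket Ap Bm = - (2 * Am))
    (h8 : P.bracket Ap Bp = 0)
    (h9 : P.bracket Am Bp = 2 * Ap)
    (h10 : P.bracket Am Bm = 0)
    (hM : ∀ g ∈ ({Nel, Ap, Am, Bp, Bm, Mm} : Set B), P.bracket Mm g = 0) :
    ∀ g ∈ ({Nel, Ap, Am, Bp, Bm, Mm} : Set B),
      P.bracket
        (Mm * (Nel ^ 2 - Bp * Bm + Mm * Nel) - Ap * Am * (Mm + 2 * Nel)
          + Bp * Am ^ 2 + Ap ^ 2 * Bm) g = 0 := by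
  have hone : ∀ a : B, P.bracket a 1 = 0 := fun a => by
    have h := P.leibniz a 1 1
    simpa using h
  have htwo : ∀ a : B, P.bracket a (2 : B) = 0 := fun a => by
    have : (2 : B) = 1 + 1 := by norm_num
    rw [this, map_add, hone, add_zero]
  have hfour : ∀ a : B, P.bracket a (4 : B) = 0 := fun a => by
    have : (4 : B) = 2 * 2 := by norm_num
    rw [this, P.leibniz, htwo, zero_mul, mul_zero, add_zero]
  have hself : ∀ a : B, P.bracket a a = 0 := fun a => by
    have h : (2 : K) • P.bracket a a = 0 := by
      rw [two_smul]
      nth_rewrite 1 [P.antisymm]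
      exact neg_add_cancel _
    calc P.bracket a a = (2 : K)⁻¹ • ((2 : K) • P.bracket a a) := by
          rw [smul_smul, inv_mul_cancel₀ (two_ne_zero), one_smul]
      _ = 0 := by rw [h, smul_zero]
  have hMN := hM Nel (by simp)
  have hMAp := hM Ap (by simp)
  have hMAm := hM Am (by simp)
  have hMBp := hM Bp (by simp)
  have hMBm := hM Bm (by simp)
  have hMM := hM Mm (by simp)
  have anti : ∀ a b : B, P.bracket a b = - P.bracket b a := P.antisymm
  set C : B := Mm * (Nel ^ 2 - Bp * Bm + Mm * Nel) - Ap * Am * (Mm + 2 * Nel)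
          + Bp * Am ^ 2 + Ap ^ 2 * Bm with hC
  have key : ∀ g : B, P.bracket C g = - P.bracket g C := fun g => P.antisymm _ _
  have cN : P.bracket Nel C = 0 := by
    simp only [hC, pow_two, map_add, map_sub, P.leibniz, h1, h2, h3, h4, h5,
      anti Nel Mm, hMN, htwo, hfour, hself]
    ring
  have cAp : P.bracket Ap C = 0 := by
    simp only [hC, pow_two, map_add, map_sub, P.leibniz, anti Ap Nel, h1,
      anti Ap Am, h3, h7, h8, anti Ap Mm, hMAp, htwo, hfour, hself]
    ring
  have cAm : P.bracket Am C = 0 := by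
    simp only [hC, pow_two, map_add, map_sub, P.leibniz, anti Am Nel, h2,
      h3, h9, h10, anti Am Mm, hMAm, htwo, hfour, hself]
    ring
  have cBp : P.bracket Bp C = 0 := by
    simp only [hC, pow_two, map_add, map_sub, P.leibniz, anti Bp Nel, h4,
      anti Bp Ap, h8, anti Bp Am, h9, anti Bp Bm, h6, anti Bp Mm, hMBp, htwo, hfour, hself]
    ring
  have cBm : P.bracket Bm C = 0 := by
    simp only [hC, pow_two, map_add, map_sub, P.leibniz, anti Bm Nel, h5,
      anti Bm Ap, h7, anti Bm Am, h10, h6, anti Bm Mm, hMBm, htwo, hfour, hself]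
    ring
  have cM : P.bracket Mm C = 0 := by
    simp only [hC, pow_two, map_add, map_sub, P.leibniz, hMN, hMAp, hMAm, hMBp,
      hMBm, hMM, htwo, hfour, hself]
    ring
  intro g hg
  simp only [Set.mem_insert_iff, Set.mem_singleton_iff] at hg
  rcases hg with rfl | rfl | rfl | rfl | rfl | rfl <;>
    rw [key] <;> simp [cN, cAp, cAm, cBp, cBm, cM]
end
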